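/- arXiv:2306.09561 — 2 statements merged into one kernel-verified Lean document; each statement's English description precedes it below -/
import Mathlib

section
/- Matrix characterisation (propositional case): a propositional DNF matrix M is valid (satisfied by every valuation) if and only if every path through M contains a complementary pair of literals, i.e., contains both an atom and its negation. -/
/-- A propositional literal: an atom together with a polarity. -/
abbrev Lit (α : Type*) := α × Bool

/-- A valuation satisfies a literal. -/
def satLit {α : Type*} (v : α → Bool) (L : Lit α) : Prop := v L.1 = L.2

/-- A valuation satisfies a clause (conjunction of its literals). -/
def satClause {α : Type*} (v : α → Bool) (C : Finset (Lit α)) : Prop :=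
  ∀ L ∈ C, satLit v L

/-- A valuation satisfies a matrix (disjunction of its clauses, DNF). -/
def satMatrix {α : Type*} (v : α → Bool) (M : Finset (Finset (Lit α))) : Prop :=
  ∃ C ∈ M, satClause v C

/-!
A valuation fails to satisfy the DNF matrix exactly when it falsifies some literal of each
clause, i.e. when it falsifies every literal on some path. A path whose literals can all be
falsified contains no complementary pair, since a valuation falsifies exactly one of two
complementary literals. Conversely, a path without complementary pairs is falsified by the
valuation making an atom true iff its negative literal lies on the path.
-/

def Complementary {α : Type*} (L L' : Lit α) : Prop := L.1 = L'.1 ∧ L.2 = !L'.2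

theorem Complementary.satLit_iff_not {α : Type*} {L L' : Lit α} (h : Complementary L L')
    (v : α → Bool) : satLit v L ↔ ¬ satLit v L' := by
  obtain ⟨hatom, hpol⟩ := h
  unfold satLit
  rw [hatom, hpol]
  cases v L'.1 <;> cases L'.2 <;> decide

theorem not_satClause_iff {α : Type*} {v : α → Bool} {C : Finset (Lit α)} :
    ¬ satClause v C ↔ ∃ L ∈ C, ¬ satLit v L := by
  simp only [satClause, not_forall, exists_prop]

theorem exists_valuation_falsifying {α : Type*} (S : Set (Lit α))
    (hS : ∀ L ∈ S, ∀ L' ∈ S, ¬ Complementary L L') :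
    ∃ v : α → Bool, ∀ L ∈ S, ¬ satLit v L := by
  classical
  refine ⟨fun a => decide ((a, false) ∈ S), fun ⟨a, b⟩ hL hsat => ?_⟩
  cases b
  · exact of_decide_eq_false hsat hL
  · exact hS (a, true) hL (a, false) (of_decide_eq_true hsat) ⟨rfl, rfl⟩

theorem matrix_characterisation_general {α : Type*} (n : ℕ)
    (C : Fin n → Finset (Lit α)) :
    (∀ v : α → Bool, ∃ i, satClause v (C i)) ↔
    (∀ p : Fin n → Lit α, (∀ i, p i ∈ C i) →
      ∃ i j, (p i).1 = (p j).1 ∧ (p i).2 = !(p j).2) := by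
  constructor
  · intro hvalid p hp
    by_contra hconsistent
    obtain ⟨v, hv⟩ := exists_valuation_falsifying (Set.range p) <| by
      rintro _ ⟨i, rfl⟩ _ ⟨j, rfl⟩ hcompl
      exact hconsistent ⟨i, j, hcompl⟩
    obtain ⟨i, hi⟩ := hvalid v
    exact hv (p i) ⟨i, rfl⟩ (hi (p i) (hp i))
  · intro hpaths v
    by_contra! hinvalid
    choose p hp hfalse using fun i => not_satClause_iff.1 (hinvalid i)
    obtain ⟨i, j, hcompl⟩ := hpaths p hp
    exact hfalse j ((Complementary.satLit_iff_not hcompl v).not_left.1 (hfalse i))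

/-- Matrix characterisation: a DNF matrix is valid iff every path through it
contains a complementary pair of literals. -/
theorem matrix_characterisation {α : Type*} (n : ℕ)
    (C : Fin n → Finset (Lit α)) (hC : ∀ i, (C i).Nonempty) :
    (∀ v : α → Bool, ∃ i, satClause v (C i)) ↔
    (∀ p : Fin n → Lit α, (∀ i, p i ∈ C i) →
      ∃ i j, (p i).1 = (p j).1 ∧ (p i).2 = !(p j).2) :=
  matrix_characterisation_general n C
end

section
/- If some path through a propositional DNF matrix M contains no complementary pair of literals, then M is falsifiable: there exists a valuation assigning false to every literal on that path, and this valuation does not satisfy M. -/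
/-! Setting every literal of a set without complementary pairs to false is consistent: make an atom
true exactly when its negative literal is in the set. On an open path this valuation falsifies one
literal of every clause, hence every clause of the matrix. -/

section Falsifier

variable {α : Type*}

def IsConsistent (S : Set (Lit α)) : Prop :=
  ∀ L ∈ S, (L.1, !L.2) ∉ S

open Classical in
noncomputable def falsifier (S : Set (Lit α)) : α → Bool :=
  fun a => decide ((a, false) ∈ S)

theorem not_satLit_falsifier {S : Set (Lit α)} (hS : IsConsistent S) {L : Lit α} (hL : L ∈ S) :
    ¬ satLit (falsifier S) L := by
  obtain ⟨a, _ | _⟩ := L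
  · simp [satLit, falsifier, hL]
  · simpa [satLit, falsifier] using hS _ hL

theorem not_satClause_of_not_satLit {v : α → Bool} {C : Finset (Lit α)} {L : Lit α} (hL : L ∈ C)
    (h : ¬ satLit v L) : ¬ satClause v C :=
  fun hC => h (hC L hL)

theorem isConsistent_range {ι : Type*} {p : ι → Lit α}
    (hopen : ¬ ∃ i j, (p i).1 = (p j).1 ∧ (p i).2 = !(p j).2) : IsConsistent (Set.range p) := by
  rintro _ ⟨j, rfl⟩ ⟨i, hi⟩
  exact hopen ⟨i, j, by simp [hi]⟩

end Falsifier

/-- If some path through a DNF matrix contains no complementary pair, then the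
matrix is falsifiable by a valuation making every literal on that path false. -/
theorem falsifiable_of_open_path {α : Type*} (n : ℕ)
    (C : Fin n → Finset (Lit α))
    (p : Fin n → Lit α) (hp : ∀ i, p i ∈ C i)
    (hopen : ¬ ∃ i j, (p i).1 = (p j).1 ∧ (p i).2 = !(p j).2) :
    ∃ v : α → Bool, (∀ i, ¬ satLit v (p i)) ∧ ¬ (∃ i, satClause v (C i)) := by
  have hS := isConsistent_range hopen
  have hpath : ∀ i, ¬ satLit (falsifier (Set.range p)) (p i) :=
    fun i => not_satLit_falsifier hS ⟨i, rfl⟩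
  exact ⟨falsifier (Set.range p), hpath,
    fun ⟨i, hi⟩ => not_satClause_of_not_satLit (hp i) (hpath i) hi⟩
end
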